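/- (Two-step Bellman unroll of the occupancy, SOPE_2 identity.) Under the support assumption, J(π_e) = E_{τ∼p_{π_b}}[ρ_1 r(S_1,A_1) + γ ρ_1 ρ_2 r(S_2,A_2) + Σ_{t=3}^{∞} γ^{t−1} (d^{π_e}(S_{t−2},A_{t−2})/d^{π_b}(S_{t−2},A_{t−2})) ρ_{t−1} ρ_t r(S_t,A_t)], where all ratios are well defined p_{π_b}-almost surely. -/

import Mathlib

open Finset

variable {S A : Type*} [Fintype S] [Fintype A] [DecidableEq S] [DecidableEq A]
  [Inhabited S] [Inhabited A]

/-- Weight contributed by the `t`-th step of trajectory `τ` under initial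
distribution `d1`, transition kernel `T` and policy `π` (`π s a = π(a|s)`,
`T s a s' = T(s'|s,a)`). -/
noncomputable def stepW (d1 : S → ℝ) (T : S → A → S → ℝ) (π : S → A → ℝ)
    (τ : ℕ → S × A) : ℕ → ℝ
  | 0 => d1 (τ 0).1 * π (τ 0).1 (τ 0).2
  | t + 1 => T (τ t).1 (τ t).2 (τ (t + 1)).1 * π (τ (t + 1)).1 (τ (t + 1)).2

/-- Probability under `p_π` of the first `n` steps (times `0, …, n-1`) of `τ`. -/
noncomputable def preP (d1 : S → ℝ) (T : S → A → S → ℝ) (π : S → A → ℝ)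
    (n : ℕ) (τ : ℕ → S × A) : ℝ :=
  ∏ t ∈ range n, stepW d1 T π τ t

/-- Extension of a length-`n` prefix to an infinite trajectory. -/
def extTraj {n : ℕ} (σ : Fin n → S × A) : ℕ → S × A :=
  fun t => if h : t < n then σ ⟨t, h⟩ else default

/-- Expectation under `p_π` of a function depending only on the first `n` steps
of the trajectory. -/
noncomputable def expVal (d1 : S → ℝ) (T : S → A → S → ℝ) (π : S → A → ℝ)
    (n : ℕ) (f : (ℕ → S × A) → ℝ) : ℝ :=
  ∑ σ : Fin n → S × A, preP d1 T π n (extTraj σ) * f (extTraj σ)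

/-- `d_t^π(s,a)`, the time-`t` state-action distribution (time is 0-indexed,
so `t = 0` is the paper's time `1`). -/
noncomputable def dSA (d1 : S → ℝ) (T : S → A → S → ℝ) (π : S → A → ℝ)
    (t : ℕ) (s : S) (a : A) : ℝ :=
  expVal d1 T π (t + 1) (fun τ => if τ t = (s, a) then 1 else 0)

/-- Single-step likelihood ratio `ρ_t = π_e(A_t|S_t)/π_b(A_t|S_t)`
(0-indexed time). -/
noncomputable def rho (πb πe : S → A → ℝ) (τ : ℕ → S × A) (t : ℕ) : ℝ :=
  πe (τ t).1 (τ t).2 / πb (τ t).1 (τ t).2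

/-- Conditional expectation under `p_π` given `(S_t, A_t) = (s, a)`, for a
function of the first `n` steps. -/
noncomputable def condExpSA (d1 : S → ℝ) (T : S → A → S → ℝ) (π : S → A → ℝ)
    (n t : ℕ) (s : S) (a : A) (f : (ℕ → S × A) → ℝ) : ℝ :=
  expVal d1 T π n (fun τ => if τ t = (s, a) then f τ else 0) / dSA d1 T π t s a

/-- Averaged state-action distribution `d_{1:Th}^π` over the first `Th` steps
with discount `γ`. -/
noncomputable def dAvg (d1 : S → ℝ) (T : S → A → S → ℝ) (π : S → A → ℝ)
    (γ : ℝ) (Th : ℕ) (s : S) (a : A) : ℝ :=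
  (∑ t ∈ range Th, γ ^ t * dSA d1 T π t s a) / (∑ t ∈ range Th, γ ^ t)

/-- Discounted average state-action occupancy `d^π` (infinite horizon),
`d^π(s,a) = (1-γ) Σ_{t≥1} γ^{t-1} d_t^π(s,a)`. -/
noncomputable def dInf (d1 : S → ℝ) (T : S → A → S → ℝ) (π : S → A → ℝ)
    (γ : ℝ) (s : S) (a : A) : ℝ :=
  (1 - γ) * ∑' t : ℕ, γ ^ t * dSA d1 T π t s a

/-- Infinite-horizon value `J(π) = E_{p_π}[Σ_{t≥1} γ^{t-1} R_t]`. -/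
noncomputable def Jinf (d1 : S → ℝ) (T : S → A → S → ℝ) (π : S → A → ℝ)
    (r : S → A → ℝ) (γ : ℝ) : ℝ :=
  ∑' t : ℕ, γ ^ t * expVal d1 T π (t + 1) (fun τ => r (τ t).1 (τ t).2)

/-- Doubly-robust weight `w(m, n)` of the paper (`m` is the paper's 1-indexed
time, with `w(0, n) = 1`). -/
noncomputable def wDR (d1 : S → ℝ) (T : S → A → S → ℝ) (πb πe : S → A → ℝ)
    (γ : ℝ) (n : ℕ) (τ : ℕ → S × A) (m : ℕ) : ℝ :=
  if m = 0 then 1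
  else if m ≤ n then ∏ j ∈ range m, rho πb πe τ j
  else (dInf d1 T πe γ (τ (m - n - 1)).1 (τ (m - n - 1)).2 /
        dInf d1 T πb γ (τ (m - n - 1)).1 (τ (m - n - 1)).2) *
      ∏ j ∈ Icc (m - n) (m - 1), rho πb πe τ j

set_option linter.unusedSectionVars false

section SopeAux

variable (d1 : S → ℝ) (T : S → A → S → ℝ) (π : S → A → ℝ) (πb πe : S → A → ℝ)

lemma extTraj_lt {n : ℕ} (σ : Fin n → S × A) {t : ℕ} (h : t < n) :
    extTraj σ t = σ ⟨t, h⟩ := dif_pos h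

lemma stepW_congr {τ τ' : ℕ → S × A} {t : ℕ} (h : ∀ u ≤ t, τ u = τ' u) :
    stepW d1 T π τ t = stepW d1 T π τ' t := by
  cases t with
  | zero => simp only [stepW, h 0 le_rfl]
  | succ m => simp only [stepW, h m (Nat.le_succ m), h (m + 1) le_rfl]

lemma preP_congr {n : ℕ} {τ τ' : ℕ → S × A} (h : ∀ t < n, τ t = τ' t) :
    preP d1 T π n τ = preP d1 T π n τ' := by
  unfold preP
  refine Finset.prod_congr rfl fun t ht => ?_
  rw [mem_range] at ht
  exact stepW_congr d1 T π fun u hu => h u (lt_of_le_of_lt hu ht)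

lemma sum_univ_snoc {n : ℕ} (F : (Fin (n + 1) → S × A) → ℝ) :
    ∑ σ : Fin (n + 1) → S × A, F σ
      = ∑ σ : Fin n → S × A, ∑ x : S × A, F (Fin.snoc σ x) := by
  rw [← Equiv.sum_comp (Fin.snocEquiv (fun _ => S × A)) F, Fintype.sum_prod_type,
    Finset.sum_comm]
  rfl

lemma extTraj_snoc_lt {n : ℕ} (σ : Fin n → S × A) (x : S × A) {t : ℕ} (h : t < n) :
    extTraj (Fin.snoc σ x) t = extTraj σ t := by
  rw [extTraj_lt _ h, extTraj_lt _ (h.trans (Nat.lt_succ_self n))]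
  have : (⟨t, h.trans (Nat.lt_succ_self n)⟩ : Fin (n+1)) = Fin.castSucc ⟨t, h⟩ := rfl
  rw [this, Fin.snoc_castSucc]

lemma extTraj_snoc_last {n : ℕ} (σ : Fin n → S × A) (x : S × A) :
    extTraj (Fin.snoc σ x) n = x := by
  rw [extTraj_lt _ (Nat.lt_succ_self n)]
  have : (⟨n, Nat.lt_succ_self n⟩ : Fin (n+1)) = Fin.last n := rfl
  rw [this, Fin.snoc_last]

lemma expVal_snoc (n : ℕ) (f : (ℕ → S × A) → ℝ) :
    expVal d1 T π (n + 1) f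
      = ∑ σ : Fin n → S × A, ∑ x : S × A,
          preP d1 T π n (extTraj σ) * stepW d1 T π (extTraj (Fin.snoc σ x)) n
            * f (extTraj (Fin.snoc σ x)) := by
  rw [expVal, sum_univ_snoc]
  refine Finset.sum_congr rfl fun σ _ => Finset.sum_congr rfl fun x _ => ?_
  have h1 : preP d1 T π (n + 1) (extTraj (Fin.snoc σ x))
      = preP d1 T π n (extTraj σ) * stepW d1 T π (extTraj (Fin.snoc σ x)) n := by
    rw [preP, Finset.prod_range_succ, ← preP,
      preP_congr d1 T π (fun t ht => extTraj_snoc_lt σ x ht)]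
  rw [h1]

lemma sum_stepW_snoc (hd1sum : ∑ s, d1 s = 1) (hTsum : ∀ s a, ∑ s', T s a s' = 1)
    (hπsum : ∀ s, ∑ a, π s a = 1) (n : ℕ) (σ : Fin n → S × A) :
    ∑ x : S × A, stepW d1 T π (extTraj (Fin.snoc σ x)) n = 1 := by
  cases n with
  | zero =>
    have h : ∀ x : S × A, stepW d1 T π (extTraj (Fin.snoc σ x)) 0
        = d1 x.1 * π x.1 x.2 := by
      intro x
      simp only [stepW, extTraj_snoc_last]
    rw [Finset.sum_congr rfl fun x _ => h x, Fintype.sum_prod_type]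
    simp only [← Finset.mul_sum, hπsum, mul_one, hd1sum]
  | succ m =>
    have h : ∀ x : S × A, stepW d1 T π (extTraj (Fin.snoc σ x)) (m + 1)
        = T (extTraj σ m).1 (extTraj σ m).2 x.1 * π x.1 x.2 := by
      intro x
      simp only [stepW, extTraj_snoc_last, extTraj_snoc_lt σ x (Nat.lt_succ_self m)]
    rw [Finset.sum_congr rfl fun x _ => h x, Fintype.sum_prod_type]
    simp only [← Finset.mul_sum, hπsum, mul_one, hTsum]

lemma expVal_of_prefix (hd1sum : ∑ s, d1 s = 1) (hTsum : ∀ s a, ∑ s', T s a s' = 1)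
    (hπsum : ∀ s, ∑ a, π s a = 1) (n : ℕ) (f : (ℕ → S × A) → ℝ)
    (hf : ∀ τ τ' : ℕ → S × A, (∀ t < n, τ t = τ' t) → f τ = f τ') :
    expVal d1 T π (n + 1) f = expVal d1 T π n f := by
  rw [expVal_snoc, expVal]
  refine Finset.sum_congr rfl fun σ _ => ?_
  have hfx : ∀ x : S × A, f (extTraj (Fin.snoc σ x)) = f (extTraj σ) := fun x =>
    hf _ _ fun t ht => extTraj_snoc_lt σ x ht
  calc ∑ x : S × A, preP d1 T π n (extTraj σ)
          * stepW d1 T π (extTraj (Fin.snoc σ x)) n * f (extTraj (Fin.snoc σ x))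
      = preP d1 T π n (extTraj σ) * f (extTraj σ)
          * ∑ x : S × A, stepW d1 T π (extTraj (Fin.snoc σ x)) n := by
        rw [Finset.mul_sum]
        exact Finset.sum_congr rfl fun x _ => by rw [hfx x]; ring
    _ = preP d1 T π n (extTraj σ) * f (extTraj σ) := by
        rw [sum_stepW_snoc d1 T π hd1sum hTsum hπsum, mul_one]

lemma expVal_peel (n : ℕ) (g : (ℕ → S × A) → S × A → ℝ)
    (hg : ∀ τ τ' : ℕ → S × A, (∀ t < n + 1, τ t = τ' t) → ∀ x, g τ x = g τ' x) :
    expVal d1 T π (n + 2) (fun τ => g τ (τ (n + 1)))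
      = expVal d1 T π (n + 1) (fun τ =>
          ∑ x : S × A, T (τ n).1 (τ n).2 x.1 * π x.1 x.2 * g τ x) := by
  rw [show n + 2 = (n + 1) + 1 from rfl, expVal_snoc, expVal]
  refine Finset.sum_congr rfl fun σ _ => ?_
  rw [Finset.mul_sum]
  refine Finset.sum_congr rfl fun x _ => ?_
  have h1 : extTraj (Fin.snoc σ x) (n + 1) = x := extTraj_snoc_last σ x
  have h2 : stepW d1 T π (extTraj (Fin.snoc σ x)) (n + 1)
      = T (extTraj σ n).1 (extTraj σ n).2 x.1 * π x.1 x.2 := by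
    simp only [stepW, h1, extTraj_snoc_lt σ x (Nat.lt_succ_self n)]
  have h3 : g (extTraj (Fin.snoc σ x)) x = g (extTraj σ) x :=
    hg _ _ (fun t ht => extTraj_snoc_lt σ x ht) x
  rw [h2, h1, h3]
  ring

lemma expVal_congr (n : ℕ) {f g : (ℕ → S × A) → ℝ} (h : ∀ τ, f τ = g τ) :
    expVal d1 T π n f = expVal d1 T π n g := by
  rw [funext h]

lemma expVal_add (n : ℕ) (f g : (ℕ → S × A) → ℝ) :
    expVal d1 T π n (fun τ => f τ + g τ)
      = expVal d1 T π n f + expVal d1 T π n g := by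
  rw [expVal, expVal, expVal, ← Finset.sum_add_distrib]
  exact Finset.sum_congr rfl fun σ _ => by ring

lemma expVal_const_mul (n : ℕ) (c : ℝ) (f : (ℕ → S × A) → ℝ) :
    expVal d1 T π n (fun τ => c * f τ) = c * expVal d1 T π n f := by
  rw [expVal, expVal, Finset.mul_sum]
  exact Finset.sum_congr rfl fun σ _ => by ring

lemma expVal_one (hd1sum : ∑ s, d1 s = 1) (hTsum : ∀ s a, ∑ s', T s a s' = 1)
    (hπsum : ∀ s, ∑ a, π s a = 1) :
    ∀ n : ℕ, expVal d1 T π n (fun _ => (1 : ℝ)) = 1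
  | 0 => by simp [expVal, preP]
  | n + 1 => by
    rw [expVal_of_prefix d1 T π hd1sum hTsum hπsum n (fun _ => (1:ℝ)) (fun _ _ _ => rfl),
      expVal_one hd1sum hTsum hπsum n]

lemma expVal_fun_last (k : ℕ) (h : S × A → ℝ) :
    expVal d1 T π (k + 1) (fun τ => h (τ k))
      = ∑ p : S × A, dSA d1 T π k p.1 p.2 * h p := by
  have hr : ∀ p : S × A, dSA d1 T π k p.1 p.2 * h p
      = ∑ σ : Fin (k+1) → S × A, preP d1 T π (k+1) (extTraj σ)
          * (if extTraj σ k = (p.1, p.2) then (1:ℝ) else 0) * h p := by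
    intro p
    rw [dSA, expVal, Finset.sum_mul]
  rw [expVal, Finset.sum_congr rfl fun p _ => hr p, Finset.sum_comm]
  refine Finset.sum_congr rfl fun σ _ => ?_
  simp [mul_ite, ite_mul, Finset.sum_ite_eq]

end SopeAux
section SopeAux2

set_option linter.unusedSectionVars false

variable (d1 : S → ℝ) (T : S → A → S → ℝ) (π : S → A → ℝ) (πb πe : S → A → ℝ)

lemma pb_zero (hπe : ∀ s a, 0 ≤ πe s a) (hsupp : ∀ s a, 0 < πe s a → 0 < πb s a)
    {s : S} {a : A} (h : πb s a = 0) : πe s a = 0 := by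
  by_contra hne
  have hpos : 0 < πe s a := lt_of_le_of_ne (hπe s a) (Ne.symm hne)
  have := hsupp s a hpos
  rw [h] at this
  exact lt_irrefl 0 this

lemma pcancel (hπe : ∀ s a, 0 ≤ πe s a) (hsupp : ∀ s a, 0 < πe s a → 0 < πb s a)
    (s : S) (a : A) : πb s a * (πe s a / πb s a) = πe s a := by
  by_cases h : πb s a = 0
  · rw [h, pb_zero πb πe hπe hsupp h]
    simp
  · field_simp

lemma stepW_rho (hπe : ∀ s a, 0 ≤ πe s a) (hsupp : ∀ s a, 0 < πe s a → 0 < πb s a)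
    (τ : ℕ → S × A) (t : ℕ) :
    stepW d1 T πb τ t * rho πb πe τ t = stepW d1 T πe τ t := by
  cases t with
  | zero =>
    simp only [stepW, rho]
    rw [mul_assoc, pcancel πb πe hπe hsupp]
  | succ m =>
    simp only [stepW, rho]
    rw [mul_assoc, pcancel πb πe hπe hsupp]

lemma preP_rho (hπe : ∀ s a, 0 ≤ πe s a) (hsupp : ∀ s a, 0 < πe s a → 0 < πb s a)
    (n : ℕ) (τ : ℕ → S × A) :
    preP d1 T πb n τ * ∏ j ∈ range n, rho πb πe τ j = preP d1 T πe n τ := by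
  rw [preP, preP, ← Finset.prod_mul_distrib]
  exact Finset.prod_congr rfl fun t _ => stepW_rho d1 T πb πe hπe hsupp τ t

lemma expVal_rho (hπe : ∀ s a, 0 ≤ πe s a) (hsupp : ∀ s a, 0 < πe s a → 0 < πb s a)
    (n : ℕ) (f : (ℕ → S × A) → ℝ) :
    expVal d1 T πb n (fun τ => (∏ j ∈ range n, rho πb πe τ j) * f τ)
      = expVal d1 T πe n f := by
  rw [expVal, expVal]
  refine Finset.sum_congr rfl fun σ _ => ?_
  rw [← mul_assoc, preP_rho d1 T πb πe hπe hsupp]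

lemma stepW_nonneg (hd1 : ∀ s, 0 ≤ d1 s) (hT : ∀ s a s', 0 ≤ T s a s')
    (hπ : ∀ s a, 0 ≤ π s a) (τ : ℕ → S × A) (t : ℕ) : 0 ≤ stepW d1 T π τ t := by
  cases t with
  | zero => exact mul_nonneg (hd1 _) (hπ _ _)
  | succ m => exact mul_nonneg (hT _ _ _) (hπ _ _)

lemma preP_nonneg (hd1 : ∀ s, 0 ≤ d1 s) (hT : ∀ s a s', 0 ≤ T s a s')
    (hπ : ∀ s a, 0 ≤ π s a) (n : ℕ) (τ : ℕ → S × A) : 0 ≤ preP d1 T π n τ :=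
  Finset.prod_nonneg fun t _ => stepW_nonneg d1 T π hd1 hT hπ τ t

lemma dSA_nonneg (hd1 : ∀ s, 0 ≤ d1 s) (hT : ∀ s a s', 0 ≤ T s a s')
    (hπ : ∀ s a, 0 ≤ π s a) (t : ℕ) (s : S) (a : A) : 0 ≤ dSA d1 T π t s a := by
  rw [dSA, expVal]
  refine Finset.sum_nonneg fun σ _ => mul_nonneg
    (preP_nonneg d1 T π hd1 hT hπ _ _) ?_
  split <;> norm_num

lemma sum_dSA (hd1sum : ∑ s, d1 s = 1) (hTsum : ∀ s a, ∑ s', T s a s' = 1)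
    (hπsum : ∀ s, ∑ a, π s a = 1) (k : ℕ) :
    ∑ p : S × A, dSA d1 T π k p.1 p.2 = 1 := by
  have h := expVal_fun_last d1 T π k (fun _ => (1 : ℝ))
  rw [expVal_one d1 T π hd1sum hTsum hπsum (k + 1)] at h
  simpa using h.symm

lemma dSA_le_one (hd1 : ∀ s, 0 ≤ d1 s) (hd1sum : ∑ s, d1 s = 1)
    (hT : ∀ s a s', 0 ≤ T s a s') (hTsum : ∀ s a, ∑ s', T s a s' = 1)
    (hπ : ∀ s a, 0 ≤ π s a) (hπsum : ∀ s, ∑ a, π s a = 1)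
    (k : ℕ) (p : S × A) : dSA d1 T π k p.1 p.2 ≤ 1 := by
  have h := Finset.single_le_sum
    (f := fun q : S × A => dSA d1 T π k q.1 q.2)
    (fun q _ => dSA_nonneg d1 T π hd1 hT hπ k q.1 q.2) (Finset.mem_univ p)
  rw [sum_dSA d1 T π hd1sum hTsum hπsum k] at h
  exact h

lemma preP_zero (hπe : ∀ s a, 0 ≤ πe s a) (hsupp : ∀ s a, 0 < πe s a → 0 < πb s a)
    {n : ℕ} {τ : ℕ → S × A} (h : preP d1 T πb n τ = 0) : preP d1 T πe n τ = 0 := by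
  rw [preP] at h ⊢
  rcases Finset.prod_eq_zero_iff.mp h with ⟨t, ht, hz⟩
  refine Finset.prod_eq_zero ht ?_
  cases t with
  | zero =>
    rcases mul_eq_zero.mp hz with h' | h'
    · simp [stepW, h']
    · simp [stepW, pb_zero πb πe hπe hsupp h']
  | succ m =>
    rcases mul_eq_zero.mp hz with h' | h'
    · simp [stepW, h']
    · simp [stepW, pb_zero πb πe hπe hsupp h']

lemma dSA_zero (hd1 : ∀ s, 0 ≤ d1 s) (hT : ∀ s a s', 0 ≤ T s a s')
    (hπb : ∀ s a, 0 ≤ πb s a) (hπe : ∀ s a, 0 ≤ πe s a)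
    (hsupp : ∀ s a, 0 < πe s a → 0 < πb s a)
    {k : ℕ} {s : S} {a : A} (h : dSA d1 T πb k s a = 0) : dSA d1 T πe k s a = 0 := by
  rw [dSA, expVal] at h ⊢
  have hterm := (Finset.sum_eq_zero_iff_of_nonneg (fun σ _ =>
    mul_nonneg (preP_nonneg d1 T πb hd1 hT hπb _ _)
      (by split <;> norm_num))).mp h
  refine Finset.sum_eq_zero fun σ _ => ?_
  by_cases hc : extTraj σ k = (s, a)
  · have h0 := hterm σ (Finset.mem_univ σ)
    rw [if_pos hc, mul_one] at h0
    rw [if_pos hc, mul_one]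
    exact preP_zero d1 T πb πe hπe hsupp h0
  · rw [if_neg hc, mul_zero]

end SopeAux2
/-- One-step backup operator under policy `π`. -/
noncomputable def qOp (T : S → A → S → ℝ) (π : S → A → ℝ) (g : S × A → ℝ)
    (p : S × A) : ℝ :=
  ∑ x : S × A, T p.1 p.2 x.1 * π x.1 x.2 * g x

section SopeAux3

set_option linter.unusedSectionVars false

variable (d1 : S → ℝ) (T : S → A → S → ℝ) (π : S → A → ℝ) (πb πe : S → A → ℝ)
  (γ : ℝ)

lemma summable_gdSA (hd1 : ∀ s, 0 ≤ d1 s) (hd1sum : ∑ s, d1 s = 1)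
    (hT : ∀ s a s', 0 ≤ T s a s') (hTsum : ∀ s a, ∑ s', T s a s' = 1)
    (hπ : ∀ s a, 0 ≤ π s a) (hπsum : ∀ s, ∑ a, π s a = 1)
    (hγ0 : 0 ≤ γ) (hγ1 : γ < 1) (p : S × A) :
    Summable fun t => γ ^ t * dSA d1 T π t p.1 p.2 := by
  refine Summable.of_nonneg_of_le
    (fun t => mul_nonneg (pow_nonneg hγ0 t) (dSA_nonneg d1 T π hd1 hT hπ t p.1 p.2))
    (fun t => ?_) (summable_geometric_of_lt_one hγ0 hγ1)
  calc γ ^ t * dSA d1 T π t p.1 p.2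
      ≤ γ ^ t * 1 := mul_le_mul_of_nonneg_left
        (dSA_le_one d1 T π hd1 hd1sum hT hTsum hπ hπsum t p) (pow_nonneg hγ0 t)
    _ = γ ^ t := mul_one _

lemma tsum_gdSA (hγ1 : γ < 1) (s : S) (a : A) :
    ∑' t : ℕ, γ ^ t * dSA d1 T π t s a = dInf d1 T π γ s a / (1 - γ) := by
  rw [eq_div_iff (by intro h; apply absurd hγ1; rw [show γ = 1 by linarith]; exact lt_irrefl 1),
    dInf]
  ring

lemma dInf_zero (hd1 : ∀ s, 0 ≤ d1 s) (hd1sum : ∑ s, d1 s = 1)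
    (hT : ∀ s a s', 0 ≤ T s a s') (hTsum : ∀ s a, ∑ s', T s a s' = 1)
    (hπb : ∀ s a, 0 ≤ πb s a) (hπbsum : ∀ s, ∑ a, πb s a = 1)
    (hπe : ∀ s a, 0 ≤ πe s a)
    (hγ0 : 0 ≤ γ) (hγ1 : γ < 1) (hsupp : ∀ s a, 0 < πe s a → 0 < πb s a)
    {s : S} {a : A} (h : dInf d1 T πb γ s a = 0) : dInf d1 T πe γ s a = 0 := by
  have h1γ : (0 : ℝ) < 1 - γ := by linarith
  rw [dInf] at h ⊢
  have hsumb : Summable fun t => γ ^ t * dSA d1 T πb t s a :=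
    summable_gdSA d1 T πb γ hd1 hd1sum hT hTsum hπb hπbsum hγ0 hγ1 (s, a)
  have htsum : ∑' t : ℕ, γ ^ t * dSA d1 T πb t s a = 0 := by
    rcases mul_eq_zero.mp h with h' | h'
    · linarith
    · exact h'
  have hall : ∀ t, γ ^ t * dSA d1 T πb t s a = 0 := by
    intro t
    have hle := Summable.le_tsum hsumb t fun j _ =>
      mul_nonneg (pow_nonneg hγ0 j) (dSA_nonneg d1 T πb hd1 hT hπb j s a)
    rw [htsum] at hle
    exact le_antisymm hle
      (mul_nonneg (pow_nonneg hγ0 t) (dSA_nonneg d1 T πb hd1 hT hπb t s a))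
  have halle : ∀ t, γ ^ t * dSA d1 T πe t s a = 0 := by
    intro t
    rcases mul_eq_zero.mp (hall t) with h' | h'
    · rw [h', zero_mul]
    · rw [dSA_zero d1 T πb πe hd1 hT hπb hπe hsupp h', mul_zero]
  simp [halle, tsum_zero]

lemma qOp_cancel (hπe : ∀ s a, 0 ≤ πe s a) (hsupp : ∀ s a, 0 < πe s a → 0 < πb s a)
    (g : S × A → ℝ) (sa : S × A) (c : ℝ) :
    ∑ x : S × A, T sa.1 sa.2 x.1 * πb x.1 x.2
        * (c * (πe x.1 x.2 / πb x.1 x.2 * g x))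
      = c * qOp T πe g sa := by
  rw [qOp, Finset.mul_sum]
  refine Finset.sum_congr rfl fun x _ => ?_
  by_cases h : πb x.1 x.2 = 0
  · rw [h, pb_zero πb πe hπe hsupp h]
    ring
  · field_simp

lemma expVal_e_tail (hd1sum : ∑ s, d1 s = 1) (hTsum : ∀ s a, ∑ s', T s a s' = 1)
    (hπesum : ∀ s, ∑ a, πe s a = 1) (r : S → A → ℝ) (t : ℕ) :
    expVal d1 T πe (t + 3) (fun τ => r (τ (t + 2)).1 (τ (t + 2)).2)
      = ∑ p : S × A, dSA d1 T πe t p.1 p.2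
          * qOp T πe (qOp T πe (fun x => r x.1 x.2)) p := by
  have h1 := expVal_peel d1 T πe (t + 1) (fun _ x => r x.1 x.2)
    (fun _ _ _ _ => rfl)
  have h2 := expVal_peel d1 T πe t
    (fun _ x => qOp T πe (fun y => r y.1 y.2) x) (fun _ _ _ _ => rfl)
  calc expVal d1 T πe (t + 3) (fun τ => r (τ (t + 2)).1 (τ (t + 2)).2)
      = expVal d1 T πe (t + 2)
          (fun τ => qOp T πe (fun y => r y.1 y.2) (τ (t + 1))) := h1
    _ = expVal d1 T πe (t + 1)
          (fun τ => qOp T πe (qOp T πe (fun y => r y.1 y.2)) (τ t)) := h2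
    _ = _ := expVal_fun_last d1 T πe t _

lemma expVal_b_tail (hd1sum : ∑ s, d1 s = 1) (hTsum : ∀ s a, ∑ s', T s a s' = 1)
    (hπbsum : ∀ s, ∑ a, πb s a = 1)
    (hπe : ∀ s a, 0 ≤ πe s a) (hsupp : ∀ s a, 0 < πe s a → 0 < πb s a)
    (W : S × A → ℝ) (r : S → A → ℝ) (k : ℕ) :
    expVal d1 T πb (k + 3) (fun τ =>
        W (τ k) * rho πb πe τ (k + 1) * rho πb πe τ (k + 2)
          * r (τ (k + 2)).1 (τ (k + 2)).2)
      = ∑ p : S × A, dSA d1 T πb k p.1 p.2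
          * (W p * qOp T πe (qOp T πe (fun x => r x.1 x.2)) p) := by
  set r' : S × A → ℝ := fun x => r x.1 x.2 with hr'
  set Q1 : S × A → ℝ := qOp T πe r' with hQ1
  have step1 : expVal d1 T πb (k + 3) (fun τ =>
        W (τ k) * rho πb πe τ (k + 1) * rho πb πe τ (k + 2)
          * r (τ (k + 2)).1 (τ (k + 2)).2)
      = expVal d1 T πb (k + 2)
          (fun τ => W (τ k) * rho πb πe τ (k + 1) * Q1 (τ (k + 1))) := by
    have hp := expVal_peel d1 T πb (k + 1)
      (fun τ x => W (τ k) * rho πb πe τ (k + 1)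
        * (πe x.1 x.2 / πb x.1 x.2 * r' x))
      (by
        intro τ τ' h x
        simp only [rho]
        rw [h k (by omega), h (k + 1) (by omega)])
    rw [expVal_congr d1 T πb (k + 3)
        (g := fun τ => (fun τ x => W (τ k) * rho πb πe τ (k + 1)
          * (πe x.1 x.2 / πb x.1 x.2 * r' x)) τ (τ (k + 2)))
        (fun τ => by simp only [rho, hr']; ring),
      hp]
    refine expVal_congr d1 T πb (k + 2) fun τ => ?_
    exact qOp_cancel T πb πe hπe hsupp r' (τ (k + 1)) (W (τ k) * rho πb πe τ (k + 1))
  have step2 : expVal d1 T πb (k + 2)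
        (fun τ => W (τ k) * rho πb πe τ (k + 1) * Q1 (τ (k + 1)))
      = expVal d1 T πb (k + 1)
          (fun τ => W (τ k) * qOp T πe Q1 (τ k)) := by
    have hp := expVal_peel d1 T πb k
      (fun τ x => W (τ k) * (πe x.1 x.2 / πb x.1 x.2 * Q1 x))
      (by
        intro τ τ' h x
        rw [h k (by omega)])
    rw [expVal_congr d1 T πb (k + 2)
        (g := fun τ => (fun τ x => W (τ k)
          * (πe x.1 x.2 / πb x.1 x.2 * Q1 x)) τ (τ (k + 1)))
        (fun τ => by simp only [rho]; ring),
      hp]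
    refine expVal_congr d1 T πb (k + 1) fun τ => ?_
    exact qOp_cancel T πb πe hπe hsupp Q1 (τ k) (W (τ k))
  rw [step1, step2, expVal_fun_last d1 T πb k (fun p => W p * qOp T πe Q1 p)]

end SopeAux3
/-- two-step Bellman unroll of the occupancy, SOPE_2 identity:
`J(π_e) = E[ρ_1 r(S_1,A_1) + γ ρ_1 ρ_2 r(S_2,A_2)
  + Σ_(t=3)^∞ γ^(t-1) (d^πe(S_(t-2),A_(t-2))/d^πb(S_(t-2),A_(t-2))) ρ_(t-1) ρ_t r(S_t,A_t)]`
(tail reindexed by `t = k + 3`, 0-indexed coordinates). -/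
theorem sope2_identity
    (d1 : S → ℝ) (T : S → A → S → ℝ) (πb πe : S → A → ℝ) (r : S → A → ℝ)
    (γ : ℝ)
    (hd1 : ∀ s, 0 ≤ d1 s) (hd1sum : ∑ s, d1 s = 1)
    (hT : ∀ s a s', 0 ≤ T s a s') (hTsum : ∀ s a, ∑ s', T s a s' = 1)
    (hπb : ∀ s a, 0 ≤ πb s a) (hπbsum : ∀ s, ∑ a, πb s a = 1)
    (hπe : ∀ s a, 0 ≤ πe s a) (hπesum : ∀ s, ∑ a, πe s a = 1)
    (hγ0 : 0 ≤ γ) (hγ1 : γ < 1)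
    (hsupp : ∀ s a, 0 < πe s a → 0 < πb s a) :
    Jinf d1 T πe r γ
      = expVal d1 T πb 2 (fun τ =>
          rho πb πe τ 0 * r (τ 0).1 (τ 0).2
            + γ * (rho πb πe τ 0 * rho πb πe τ 1 * r (τ 1).1 (τ 1).2))
        + ∑' k : ℕ, γ ^ (k + 2) * expVal d1 T πb (k + 3)
            (fun τ => (dInf d1 T πe γ (τ k).1 (τ k).2 /
                dInf d1 T πb γ (τ k).1 (τ k).2) *
              rho πb πe τ (k + 1) * rho πb πe τ (k + 2) *
              r (τ (k + 2)).1 (τ (k + 2)).2) := by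
  have h1γ : (0 : ℝ) < 1 - γ := by linarith
  have h1γ' : (1 : ℝ) - γ ≠ 0 := ne_of_gt h1γ
  -- expansion of the per-time expected reward
  have he : ∀ t : ℕ, expVal d1 T πe (t + 1) (fun τ => r (τ t).1 (τ t).2)
      = ∑ p : S × A, dSA d1 T πe t p.1 p.2 * r p.1 p.2 := fun t =>
    expVal_fun_last d1 T πe t (fun p => r p.1 p.2)
  -- summability of the value series
  have hC : Summable (fun t : ℕ =>
      γ ^ t * expVal d1 T πe (t + 1) (fun τ => r (τ t).1 (τ t).2)) := by
    refine Summable.of_norm_bounded (g := fun t => (∑ p : S × A, |r p.1 p.2|) * γ ^ t)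
      ((summable_geometric_of_lt_one hγ0 hγ1).mul_left _) (fun t => ?_)
    rw [he t, norm_mul, norm_pow, Real.norm_eq_abs, Real.norm_eq_abs,
      abs_of_nonneg hγ0, mul_comm]
    refine mul_le_mul_of_nonneg_right ?_ (pow_nonneg hγ0 t)
    calc |∑ p : S × A, dSA d1 T πe t p.1 p.2 * r p.1 p.2|
        ≤ ∑ p : S × A, |dSA d1 T πe t p.1 p.2 * r p.1 p.2| :=
          Finset.abs_sum_le_sum_abs _ _
      _ ≤ ∑ p : S × A, |r p.1 p.2| := by
          refine Finset.sum_le_sum fun p _ => ?_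
          rw [abs_mul, abs_of_nonneg (dSA_nonneg d1 T πe hd1 hT hπe t p.1 p.2)]
          calc dSA d1 T πe t p.1 p.2 * |r p.1 p.2|
              ≤ 1 * |r p.1 p.2| := mul_le_mul_of_nonneg_right
                (dSA_le_one d1 T πe hd1 hd1sum hT hTsum hπe hπesum t p)
                (abs_nonneg _)
            _ = |r p.1 p.2| := one_mul _
  have hC1 : Summable (fun t : ℕ =>
      γ ^ (t + 1) * expVal d1 T πe (t + 1 + 1)
        (fun τ => r (τ (t + 1)).1 (τ (t + 1)).2)) :=
    (summable_nat_add_iff (f := fun t : ℕ =>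
      γ ^ t * expVal d1 T πe (t + 1) (fun τ => r (τ t).1 (τ t).2)) 1).mpr hC
  -- split off the first two terms of the value series
  have hJ : Jinf d1 T πe r γ
      = expVal d1 T πe 1 (fun τ => r (τ 0).1 (τ 0).2)
        + (γ * expVal d1 T πe 2 (fun τ => r (τ 1).1 (τ 1).2)
          + ∑' k : ℕ, γ ^ (k + 2) * expVal d1 T πe (k + 3)
              (fun τ => r (τ (k + 2)).1 (τ (k + 2)).2)) := by
    have h0 : Jinf d1 T πe r γ
        = ∑' t : ℕ, γ ^ t * expVal d1 T πe (t + 1) (fun τ => r (τ t).1 (τ t).2) := rfl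
    rw [h0, Summable.tsum_eq_zero_add hC]
    congr 1
    · norm_num
    rw [Summable.tsum_eq_zero_add hC1]
    congr 1
    · norm_num
  -- the head term
  have e1 : expVal d1 T πb 2 (fun τ => rho πb πe τ 0 * r (τ 0).1 (τ 0).2)
      = expVal d1 T πe 1 (fun τ => r (τ 0).1 (τ 0).2) := by
    have hpre := expVal_of_prefix d1 T πb hd1sum hTsum hπbsum 1
      (fun τ => rho πb πe τ 0 * r (τ 0).1 (τ 0).2)
      (fun τ τ' h => by simp only [rho]; rw [h 0 (by omega)])
    rw [show expVal d1 T πb 2 (fun τ => rho πb πe τ 0 * r (τ 0).1 (τ 0).2)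
        = expVal d1 T πb 1 (fun τ => rho πb πe τ 0 * r (τ 0).1 (τ 0).2) from hpre]
    rw [← expVal_rho d1 T πb πe hπe hsupp 1 (fun τ => r (τ 0).1 (τ 0).2)]
    exact expVal_congr d1 T πb 1 fun τ => by rw [Finset.prod_range_one]
  have e2 : expVal d1 T πb 2
        (fun τ => rho πb πe τ 0 * rho πb πe τ 1 * r (τ 1).1 (τ 1).2)
      = expVal d1 T πe 2 (fun τ => r (τ 1).1 (τ 1).2) := by
    rw [← expVal_rho d1 T πb πe hπe hsupp 2 (fun τ => r (τ 1).1 (τ 1).2)]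
    refine expVal_congr d1 T πb 2 fun τ => ?_
    rw [Finset.prod_range_succ, Finset.prod_range_one]
  have hhead : expVal d1 T πb 2 (fun τ =>
        rho πb πe τ 0 * r (τ 0).1 (τ 0).2
          + γ * (rho πb πe τ 0 * rho πb πe τ 1 * r (τ 1).1 (τ 1).2))
      = expVal d1 T πe 1 (fun τ => r (τ 0).1 (τ 0).2)
        + γ * expVal d1 T πe 2 (fun τ => r (τ 1).1 (τ 1).2) := by
    calc expVal d1 T πb 2 (fun τ =>
          rho πb πe τ 0 * r (τ 0).1 (τ 0).2
            + γ * (rho πb πe τ 0 * rho πb πe τ 1 * r (τ 1).1 (τ 1).2))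
        = expVal d1 T πb 2 (fun τ => rho πb πe τ 0 * r (τ 0).1 (τ 0).2)
          + expVal d1 T πb 2
              (fun τ => γ * (rho πb πe τ 0 * rho πb πe τ 1 * r (τ 1).1 (τ 1).2)) :=
          expVal_add d1 T πb 2 _ _
      _ = _ := by
          rw [expVal_const_mul d1 T πb 2 γ
            (fun τ => rho πb πe τ 0 * rho πb πe τ 1 * r (τ 1).1 (τ 1).2), e1, e2]
  -- the tail terms
  have heW : ∀ t : ℕ, expVal d1 T πe (t + 3)
        (fun τ => r (τ (t + 2)).1 (τ (t + 2)).2)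
      = ∑ p : S × A, dSA d1 T πe t p.1 p.2
          * qOp T πe (qOp T πe (fun x => r x.1 x.2)) p :=
    fun t => expVal_e_tail d1 T πe hd1sum hTsum hπesum r t
  have hbW : ∀ k : ℕ, expVal d1 T πb (k + 3) (fun τ =>
        (dInf d1 T πe γ (τ k).1 (τ k).2 / dInf d1 T πb γ (τ k).1 (τ k).2)
          * rho πb πe τ (k + 1) * rho πb πe τ (k + 2)
          * r (τ (k + 2)).1 (τ (k + 2)).2)
      = ∑ p : S × A, dSA d1 T πb k p.1 p.2
          * ((dInf d1 T πe γ p.1 p.2 / dInf d1 T πb γ p.1 p.2)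
            * qOp T πe (qOp T πe (fun x => r x.1 x.2)) p) :=
    fun k => expVal_b_tail d1 T πb πe hd1sum hTsum hπbsum hπe hsupp
      (fun p => dInf d1 T πe γ p.1 p.2 / dInf d1 T πb γ p.1 p.2) r k
  have htail : ∑' k : ℕ, γ ^ (k + 2) * expVal d1 T πe (k + 3)
        (fun τ => r (τ (k + 2)).1 (τ (k + 2)).2)
      = ∑' k : ℕ, γ ^ (k + 2) * expVal d1 T πb (k + 3)
          (fun τ => (dInf d1 T πe γ (τ k).1 (τ k).2
              / dInf d1 T πb γ (τ k).1 (τ k).2)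
            * rho πb πe τ (k + 1) * rho πb πe τ (k + 2)
            * r (τ (k + 2)).1 (τ (k + 2)).2) := by
    have hL : ∀ k : ℕ, γ ^ (k + 2) * expVal d1 T πe (k + 3)
          (fun τ => r (τ (k + 2)).1 (τ (k + 2)).2)
        = ∑ p : S × A, (γ ^ 2 * qOp T πe (qOp T πe (fun x => r x.1 x.2)) p)
            * (γ ^ k * dSA d1 T πe k p.1 p.2) := by
      intro k
      rw [heW k, Finset.mul_sum]
      exact Finset.sum_congr rfl fun p _ => by rw [pow_add]; ring
    have hR : ∀ k : ℕ, γ ^ (k + 2) * expVal d1 T πb (k + 3)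
          (fun τ => (dInf d1 T πe γ (τ k).1 (τ k).2
              / dInf d1 T πb γ (τ k).1 (τ k).2)
            * rho πb πe τ (k + 1) * rho πb πe τ (k + 2)
            * r (τ (k + 2)).1 (τ (k + 2)).2)
        = ∑ p : S × A, (γ ^ 2 * ((dInf d1 T πe γ p.1 p.2
              / dInf d1 T πb γ p.1 p.2)
            * qOp T πe (qOp T πe (fun x => r x.1 x.2)) p))
            * (γ ^ k * dSA d1 T πb k p.1 p.2) := by
      intro k
      rw [hbW k, Finset.mul_sum]
      exact Finset.sum_congr rfl fun p _ => by rw [pow_add]; ring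
    rw [tsum_congr hL, tsum_congr hR,
      Summable.tsum_finsetSum (fun p _ => Summable.mul_left _
        (summable_gdSA d1 T πe γ hd1 hd1sum hT hTsum hπe hπesum hγ0 hγ1 p)),
      Summable.tsum_finsetSum (fun p _ => Summable.mul_left _
        (summable_gdSA d1 T πb γ hd1 hd1sum hT hTsum hπb hπbsum hγ0 hγ1 p))]
    refine Finset.sum_congr rfl fun p _ => ?_
    rw [tsum_mul_left, tsum_mul_left, tsum_gdSA d1 T πe γ hγ1 p.1 p.2,
      tsum_gdSA d1 T πb γ hγ1 p.1 p.2]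
    by_cases h0 : dInf d1 T πb γ p.1 p.2 = 0
    · have he0 : dInf d1 T πe γ p.1 p.2 = 0 :=
        dInf_zero d1 T πb πe γ hd1 hd1sum hT hTsum hπb hπbsum hπe hγ0 hγ1 hsupp h0
      rw [h0, he0]
      simp
    · field_simp
  rw [hJ, htail, ← add_assoc, hhead]
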